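/- arXiv:2312.09666 — 5 statements merged into one kernel-verified Lean document; each statement's English description precedes it below -/
import Mathlib

section
/- Let φ : B → A be a unital linear map between unital C*-algebras such that φ(x*) = φ(x)* for all x, and such that ‖φ(x)‖ ≤ ‖x‖ for all self-adjoint x ∈ B. Then φ is positive. -/
/-- A unital, star-preserving linear map between unital C*-algebras which is
contractive on self-adjoint elements is positive. -/
theorem positive_of_selfAdjoint_contractive
    {A B : Type*}
    [NormedRing A] [StarRing A] [CStarRing A] [NormedAlgebra ℂ A] [StarModule ℂ A]
    [CompleteSpace A]
    [NormedRing B] [StarRing B] [CStarRing B] [NormedAlgebra ℂ B] [StarModule ℂ B]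
    [CompleteSpace B]
    (φ : B →ₗ[ℂ] A) (hunital : φ 1 = 1)
    (hstar : ∀ x : B, φ (star x) = star (φ x))
    (hcontr : ∀ x : B, IsSelfAdjoint x → ‖φ x‖ ≤ ‖x‖) :
    ∀ x : B, (∃ y : B, x = star y * y) → ∃ z : A, φ x = star z * z := by
  letI : CStarAlgebra A := {}
  letI : CStarAlgebra B := {}
  letI : PartialOrder A := CStarAlgebra.spectralOrder A
  letI : StarOrderedRing A := CStarAlgebra.spectralOrderedRing A
  letI : PartialOrder B := CStarAlgebra.spectralOrder B
  letI : StarOrderedRing B := CStarAlgebra.spectralOrderedRing B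
  rintro x ⟨y, rfl⟩
  set x := star y * y with hx
  have hxsa : IsSelfAdjoint x := IsSelfAdjoint.star_mul_self y
  have hxnn : (0 : B) ≤ x := star_mul_self_nonneg y
  set r : ℝ := ‖x‖ with hr
  have hr0 : (0 : ℝ) ≤ r := norm_nonneg x
  -- b = r - x is nonneg with norm ≤ r
  set b : B := algebraMap ℝ B r - x with hb
  have hbsa : IsSelfAdjoint b :=
    (IsSelfAdjoint.algebraMap B (isSelfAdjoint_iff.mpr rfl)).sub hxsa
  have hbnn : (0 : B) ≤ b := by
    have := IsSelfAdjoint.le_algebraMap_norm_self (a := x) hxsa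
    simpa [hb] using sub_nonneg.mpr this
  have hbnorm : ‖b‖ ≤ r := by
    rw [CStarAlgebra.norm_le_iff_le_algebraMap b hr0 hbnn]
    have : algebraMap ℝ B r - x ≤ algebraMap ℝ B r := by
      simpa using hxnn
    simpa [hb] using this
  -- push through φ
  have hmap : ∀ s : ℝ, φ (algebraMap ℝ B s) = algebraMap ℝ A s := by
    intro s
    have h1 : (algebraMap ℝ B s) = (s : ℂ) • (1 : B) := by
      simp [Algebra.algebraMap_eq_smul_one]
    rw [h1, map_smul, hunital, Algebra.algebraMap_eq_smul_one]
    norm_cast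
  set c : A := algebraMap ℝ A r - φ x with hc
  have hφb : φ b = c := by
    rw [hb, map_sub, hmap, hc]
  have hcsa : IsSelfAdjoint c := by
    rw [← hφb, isSelfAdjoint_iff, ← hstar, hbsa.star_eq]
  have hcnorm : ‖c‖ ≤ r := by
    rw [← hφb]
    exact (hcontr b hbsa).trans hbnorm
  -- hence φ x is nonneg
  have hφxnn : (0 : A) ≤ φ x := by
    have h1 : c ≤ algebraMap ℝ A ‖c‖ := IsSelfAdjoint.le_algebraMap_norm_self hcsa
    have h2 : algebraMap ℝ A ‖c‖ ≤ algebraMap ℝ A r := by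
      rw [← sub_nonneg, ← map_sub]
      have hone : (0 : A) ≤ 1 := by simpa using star_mul_self_nonneg (1 : A)
      calc (0 : A) = (r - ‖c‖) • 0 := by simp
        _ ≤ (r - ‖c‖) • 1 := smul_le_smul_of_nonneg_left hone (by linarith)
        _ = algebraMap ℝ A (r - ‖c‖) := (Algebra.algebraMap_eq_smul_one _).symm
    have : c ≤ algebraMap ℝ A r := h1.trans h2
    have := sub_nonneg.mpr this
    rwa [hc, sub_sub_cancel] at this
  -- take the square root
  refine ⟨CFC.sqrt (φ x), ?_⟩
  have hz : IsSelfAdjoint (CFC.sqrt (φ x)) := IsSelfAdjoint.of_nonneg (CFC.sqrt_nonneg (φ x))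
  rw [hz.star_eq, CFC.sqrt_mul_sqrt_self (φ x) hφxnn]
end

section
/- Let ω : B → A be a completely positive unital map between unital C*-algebras. Then the symmetric nullspace SN_ω = { x ∈ B : ω(y*x*xy) = 0 for all y ∈ B } is the largest closed two-sided ideal of B contained in ker ω, and it is a *-ideal (x ∈ SN_ω iff x* ∈ SN_ω). -/
open scoped ComplexStarModule

/-- Complete positivity, phrased via entrywise application on matrix algebras. -/
def CompletelyPositive
    {A B : Type*}
    [NormedRing A] [StarRing A] [CStarRing A] [NormedAlgebra ℂ A] [StarModule ℂ A]
    [NormedRing B] [StarRing B] [CStarRing B] [NormedAlgebra ℂ B] [StarModule ℂ B]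
    (φ : B →ₗ[ℂ] A) : Prop :=
  ∀ (n : ℕ) (x : Matrix (Fin n) (Fin n) B),
    (∃ y : Matrix (Fin n) (Fin n) B, x = star y * y) →
    ∃ z : Matrix (Fin n) (Fin n) A, x.map φ = star z * z

set_option maxHeartbeats 2000000 in
/-- For a completely positive unital map `ω : B → A`, the symmetric nullspace
`SN_ω = { x | ω(y* x* x y) = 0 for all y }` is the largest closed two-sided ideal
of `B` contained in `ker ω`, and it is a `*`-ideal. -/
theorem symmetric_nullspace_largest_closed_two_sided_ideal
    {A B : Type*}
    [NormedRing A] [StarRing A] [CStarRing A] [NormedAlgebra ℂ A] [StarModule ℂ A]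
    [CompleteSpace A]
    [NormedRing B] [StarRing B] [CStarRing B] [NormedAlgebra ℂ B] [StarModule ℂ B]
    [CompleteSpace B]
    (ω : B →ₗ[ℂ] A) (hunital : ω 1 = 1) (hcp : CompletelyPositive ω) :
    IsClosed {x : B | ∀ y : B, ω (star y * star x * x * y) = 0} ∧
    (0 : B) ∈ {x : B | ∀ y : B, ω (star y * star x * x * y) = 0} ∧
    (∀ x₁ x₂ : B, (∀ y, ω (star y * star x₁ * x₁ * y) = 0) →
      (∀ y, ω (star y * star x₂ * x₂ * y) = 0) →
      ∀ y, ω (star y * star (x₁ + x₂) * (x₁ + x₂) * y) = 0) ∧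
    (∀ (c : ℂ) (x : B), (∀ y, ω (star y * star x * x * y) = 0) →
      ∀ y, ω (star y * star (c • x) * (c • x) * y) = 0) ∧
    (∀ b x : B, (∀ y, ω (star y * star x * x * y) = 0) →
      (∀ y, ω (star y * star (b * x) * (b * x) * y) = 0) ∧
      (∀ y, ω (star y * star (x * b) * (x * b) * y) = 0)) ∧
    (∀ x : B, (∀ y, ω (star y * star x * x * y) = 0) → ω x = 0) ∧
    (∀ x : B, (∀ y, ω (star y * star x * x * y) = 0) ↔
      (∀ y, ω (star y * star (star x) * star x * y) = 0)) ∧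
    (∀ J : Submodule ℂ B, IsClosed (J : Set B) →
      (∀ b : B, ∀ x ∈ J, b * x ∈ J ∧ x * b ∈ J) → (∀ x ∈ J, ω x = 0) →
      ∀ x ∈ J, ∀ y, ω (star y * star x * x * y) = 0) := by
  letI instA : CStarAlgebra A :=
    { ‹NormedRing A›, ‹StarRing A›, ‹CStarRing A›, ‹NormedAlgebra ℂ A›, ‹StarModule ℂ A›,
      ‹CompleteSpace A› with }
  letI instB : CStarAlgebra B :=
    { ‹NormedRing B›, ‹StarRing B›, ‹CStarRing B›, ‹NormedAlgebra ℂ B›, ‹StarModule ℂ B›,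
      ‹CompleteSpace B› with }
  letI := CStarAlgebra.spectralOrder A
  haveI := CStarAlgebra.spectralOrderedRing A
  letI := CStarAlgebra.spectralOrder B
  haveI := CStarAlgebra.spectralOrderedRing B
  -- basic rewriting lemma
  have hrw : ∀ x y : B, star y * star x * x * y = star (x * y) * (x * y) := by
    intro x y; rw [star_mul, mul_assoc]
  -- positivity of ω
  have hpos : ∀ b : B, 0 ≤ ω (star b * b) := by
    intro b
    obtain ⟨z, hz⟩ := hcp 1 (star (Matrix.of fun _ _ : Fin 1 => b) * Matrix.of fun _ _ => b)
      ⟨_, rfl⟩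
    have h00 : ((star (Matrix.of fun _ _ : Fin 1 => b) * Matrix.of fun _ _ => b).map ω) 0 0
        = (star z * z) 0 0 := by rw [hz]
    simp only [Matrix.map_apply, Matrix.mul_apply, Matrix.star_apply, Fin.sum_univ_one,
      Matrix.of_apply] at h00
    rw [h00]
    exact star_mul_self_nonneg _
  -- ω is nonnegative on the positive cone
  have hqpos : ∀ p ∈ AddSubmonoid.closure (Set.range fun s : B => star s * s), 0 ≤ ω p := by
    intro p hp
    induction hp using AddSubmonoid.closure_induction with
    | mem x hx => obtain ⟨s, rfl⟩ := hx; exact hpos s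
    | zero => simp
    | add x y _ _ hx hy => rw [map_add]; exact add_nonneg hx hy
  -- ω is monotone
  have hmono : ∀ a b : B, a ≤ b → ω a ≤ ω b := by
    intro a b hab
    obtain ⟨p, hp, rfl⟩ := (StarOrderedRing.le_iff _ _).mp hab
    rw [map_add]
    exact le_add_of_nonneg_right (hqpos p hp)
  -- bound on selfadjoint elements
  have hsab : ∀ h : B, IsSelfAdjoint h → ‖ω h‖ ≤ 3 * ‖(1 : A)‖ * ‖h‖ := by
    intro h hsa
    have hmap : ∀ r : ℝ, ω (algebraMap ℝ B r) = algebraMap ℝ A r := by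
      intro r
      rw [Algebra.algebraMap_eq_smul_one, ω.map_smul_of_tower, hunital,
        ← Algebra.algebraMap_eq_smul_one]
    have hub : ω h ≤ algebraMap ℝ A ‖h‖ := by
      have := hmono _ _ hsa.le_algebraMap_norm_self
      rwa [hmap] at this
    have hlb : -(algebraMap ℝ A ‖h‖) ≤ ω h := by
      have := hmono _ _ hsa.neg_algebraMap_norm_le_self
      rwa [map_neg, hmap] at this
    set c : A := algebraMap ℝ A ‖h‖ with hc
    have h0' : 0 ≤ ω h + c := by
      have := add_le_add_left hlb c
      simpa using this
    have h1' : ω h + c ≤ c + c := add_le_add_left hub c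
    have h2' : ‖ω h + c‖ ≤ ‖c + c‖ := CStarAlgebra.norm_le_norm_of_nonneg_of_le h0' h1'
    have hcn : ‖c‖ = ‖h‖ * ‖(1 : A)‖ := by
      rw [hc, Algebra.algebraMap_eq_smul_one, norm_smul, Real.norm_of_nonneg (norm_nonneg h)]
    have h3' : ‖c + c‖ ≤ 2 * (‖h‖ * ‖(1 : A)‖) := by
      calc ‖c + c‖ ≤ ‖c‖ + ‖c‖ := norm_add_le _ _
        _ = 2 * (‖h‖ * ‖(1 : A)‖) := by rw [hcn]; ring
    have h4' : ‖ω h‖ ≤ ‖ω h + c‖ + ‖c‖ := by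
      calc ‖ω h‖ = ‖(ω h + c) - c‖ := by rw [add_sub_cancel_right]
        _ ≤ ‖ω h + c‖ + ‖c‖ := norm_sub_le _ _
    calc ‖ω h‖ ≤ ‖ω h + c‖ + ‖c‖ := h4'
      _ ≤ 2 * (‖h‖ * ‖(1 : A)‖) + ‖h‖ * ‖(1 : A)‖ := by
          have := h2'.trans h3'; linarith [hcn.le, hcn.ge]
      _ = 3 * ‖(1 : A)‖ * ‖h‖ := by ring
  -- ω is continuous
  have hcont : Continuous ω := by
    apply AddMonoidHomClass.continuous_of_bound ω (6 * ‖(1 : A)‖)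
    intro x
    have hx : (ℜ x : B) + Complex.I • (ℑ x : B) = x := realPart_add_I_smul_imaginaryPart x
    have hre : ‖(ℜ x : B)‖ ≤ ‖x‖ := by
      rw [realPart_apply_coe]
      calc ‖(2 : ℝ)⁻¹ • (x + star x)‖ = (2 : ℝ)⁻¹ * ‖x + star x‖ := by
            rw [norm_smul, Real.norm_of_nonneg (by norm_num)]
        _ ≤ (2 : ℝ)⁻¹ * (‖x‖ + ‖star x‖) := by
            have := norm_add_le x (star x); nlinarith
        _ = ‖x‖ := by rw [norm_star]; ring
    have him : ‖(ℑ x : B)‖ ≤ ‖x‖ := by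
      rw [imaginaryPart_apply_coe]
      calc ‖-Complex.I • (2 : ℝ)⁻¹ • (x - star x)‖ = ‖(2 : ℝ)⁻¹ • (x - star x)‖ := by
            rw [norm_smul, norm_neg, Complex.norm_I, one_mul]
        _ = (2 : ℝ)⁻¹ * ‖x - star x‖ := by
            rw [norm_smul, Real.norm_of_nonneg (by norm_num)]
        _ ≤ (2 : ℝ)⁻¹ * (‖x‖ + ‖star x‖) := by
            have := norm_sub_le x (star x); nlinarith
        _ = ‖x‖ := by rw [norm_star]; ring
    have hsplit : ω x = ω (ℜ x : B) + Complex.I • ω (ℑ x : B) := by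
      conv_lhs => rw [← hx]
      rw [map_add, map_smul]
    have hre' := hsab _ (ℜ x).2
    have him' := hsab _ (ℑ x).2
    have h1n : ‖ω x‖ ≤ ‖ω (ℜ x : B)‖ + ‖ω (ℑ x : B)‖ := by
      rw [hsplit]
      calc ‖ω (ℜ x : B) + Complex.I • ω (ℑ x : B)‖
          ≤ ‖ω (ℜ x : B)‖ + ‖Complex.I • ω (ℑ x : B)‖ := norm_add_le _ _
        _ = ‖ω (ℜ x : B)‖ + ‖ω (ℑ x : B)‖ := by rw [norm_smul, Complex.norm_I, one_mul]
    have hn1 : (0:ℝ) ≤ ‖(1:A)‖ := norm_nonneg _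
    nlinarith [hre', him', hre, him, norm_nonneg (ω (ℜ x : B)), norm_nonneg (ω (ℑ x : B))]
  refine ⟨?_, ?_, ?_, ?_, ?_, ?_, ?_, ?_⟩
  · -- closedness
    have : {x : B | ∀ y : B, ω (star y * star x * x * y) = 0}
        = ⋂ y : B, {x : B | ω (star y * star x * x * y) = 0} := by
      ext x; simp [Set.mem_iInter]
    rw [this]
    refine isClosed_iInter fun y => isClosed_eq ?_ continuous_const
    exact hcont.comp ((((continuous_const.mul continuous_star).mul continuous_id).mul
      continuous_const))
  · -- zero
    intro y; simp
  · -- additive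
    intro x₁ x₂ h1 h2 y
    have h1' : ω (star (x₁ * y) * (x₁ * y)) = 0 := by rw [← hrw]; exact h1 y
    have h2' : ω (star (x₂ * y) * (x₂ * y)) = 0 := by rw [← hrw]; exact h2 y
    have e : star ((x₁ + x₂) * y) * ((x₁ + x₂) * y) + star ((x₁ - x₂) * y) * ((x₁ - x₂) * y)
        = (star (x₁ * y) * (x₁ * y) + star (x₁ * y) * (x₁ * y))
          + (star (x₂ * y) * (x₂ * y) + star (x₂ * y) * (x₂ * y)) := by
      simp only [star_mul, star_add, star_sub]
      noncomm_ring
    have hsum : ω (star ((x₁ + x₂) * y) * ((x₁ + x₂) * y))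
        + ω (star ((x₁ - x₂) * y) * ((x₁ - x₂) * y)) = 0 := by
      rw [← map_add, e]
      simp only [map_add, h1', h2', add_zero]
    have ha := hpos ((x₁ + x₂) * y)
    have hb := hpos ((x₁ - x₂) * y)
    have hle : ω (star ((x₁ + x₂) * y) * ((x₁ + x₂) * y)) ≤ 0 :=
      hsum ▸ le_add_of_nonneg_right hb
    rw [hrw]
    exact le_antisymm hle ha
  · -- scalar multiples
    intro c x h y
    have : star y * star (c • x) * (c • x) * y
        = (c * star c) • (star y * star x * x * y) := by
      simp only [star_smul, smul_mul_assoc, mul_smul_comm, smul_smul]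
    rw [this, map_smul, h y, smul_zero]
  · -- ideal property
    intro b x h
    constructor
    · intro y
      have h' : ω (star (x * y) * (x * y)) = 0 := by rw [← hrw]; exact h y
      have hle : star (x * y) * (star b * b) * (x * y)
          ≤ ‖star b * b‖ • (star (x * y) * (x * y)) :=
        CStarAlgebra.star_left_conjugate_le_norm_smul (IsSelfAdjoint.star_mul_self b)
      have h2 := hmono _ _ hle
      rw [ω.map_smul_of_tower, h', smul_zero] at h2
      have heq : star (x * y) * (star b * b) * (x * y) = star ((b * x) * y) * ((b * x) * y) := by
        simp [star_mul, mul_assoc]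
      have h3 : 0 ≤ ω (star (x * y) * (star b * b) * (x * y)) := by
        rw [heq]; exact hpos _
      have h4 : ω (star (x * y) * (star b * b) * (x * y)) = 0 := le_antisymm h2 h3
      rw [hrw, ← heq]
      exact h4
    · intro y
      have := h (b * y)
      rw [hrw] at this
      rw [hrw, mul_assoc]
      exact this
  · -- contained in the kernel
    intro x h
    have hxx : ω (star x * x) = 0 := by
      have := h 1; simpa using this
    set M : Matrix (Fin 2) (Fin 2) B := Matrix.of ![![1, x], ![0, 0]] with hM
    obtain ⟨z, hz⟩ := hcp 2 (star M * M) ⟨M, rfl⟩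
    have h11 : ((star M * M).map ω) 1 1 = (star z * z) 1 1 := by rw [hz]
    have h01 : ((star M * M).map ω) 0 1 = (star z * z) 0 1 := by rw [hz]
    simp only [hM, Matrix.map_apply, Matrix.mul_apply, Matrix.star_apply, Fin.sum_univ_two,
      Matrix.of_apply, Matrix.cons_val', Matrix.cons_val_zero, Matrix.cons_val_one,
      Matrix.head_cons, Matrix.head_fin_const, Matrix.empty_val', Matrix.cons_val_fin_one,
      star_zero, zero_mul, mul_zero, add_zero, zero_add, star_one, one_mul, mul_one] at h11 h01
    rw [hxx] at h11
    have ha := star_mul_self_nonneg (z 0 1)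
    have hb := star_mul_self_nonneg (z 1 1)
    have hz01 : z 0 1 = 0 := by
      have h5 : star (z 0 1) * z 0 1 ≤ 0 := h11 ▸ le_add_of_nonneg_right hb
      exact (CStarRing.star_mul_self_eq_zero_iff _).mp (le_antisymm h5 ha)
    have hz11 : z 1 1 = 0 := by
      have h5 : star (z 1 1) * z 1 1 ≤ 0 := h11 ▸ le_add_of_nonneg_left ha
      exact (CStarRing.star_mul_self_eq_zero_iff _).mp (le_antisymm h5 hb)
    rw [hz01, hz11, mul_zero, mul_zero, add_zero] at h01
    exact h01
  · -- star closed
    have hstar : ∀ x : B, (∀ y, ω (star y * star x * x * y) = 0) →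
        ∀ y, ω (star y * star (star x) * star x * y) = 0 := by
      intro x h y
      set p : B := x * star x with hp
      have hpsa : IsSelfAdjoint p := IsSelfAdjoint.mul_star_self x
      have hgoal : star y * star (star x) * star x * y = star y * p * y := by
        rw [star_star, hp, mul_assoc (star y) x (star x)]
      rw [hgoal]
      -- ω (y* p² y) = 0 for all y
      have hpp : ∀ w : B, ω (star w * (p * p) * w) = 0 := by
        intro w
        have h6 := h (star x * w)
        rw [hrw] at h6
        have heq : star (x * (star x * w)) * (x * (star x * w)) = star w * (p * p) * w := by
          simp [hp, star_mul, mul_assoc]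
        rw [heq] at h6
        exact h6
      have h0 : 0 ≤ ω (star y * p * y) := by
        have heq : star y * p * y = star (star x * y) * (star x * y) := by
          simp [hp, star_mul, mul_assoc]
        rw [heq]; exact hpos _
      have hub : ∀ ε : ℝ, 0 < ε → ‖ω (star y * p * y)‖ ≤ ε * ‖ω (star y * y)‖ := by
        intro ε hε
        set q : B := p - (ε : ℝ) • 1 with hq
        have hqsa : IsSelfAdjoint q := by
          rw [hq]
          exact hpsa.sub (IsSelfAdjoint.smul (isSelfAdjoint_iff.mpr (star_trivial ε)) (IsSelfAdjoint.one B))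
        have hqq : q * q = p * p - (2 * ε) • p + (ε * ε) • (1 : B) := by
          rw [hq]
          have h1 : ((ε : ℝ) • (1 : B)) * p = ε • p := by rw [smul_mul_assoc, one_mul]
          have h2 : p * ((ε : ℝ) • (1 : B)) = ε • p := by rw [mul_smul_comm, mul_one]
          have h3 : ((ε : ℝ) • (1 : B)) * ((ε : ℝ) • (1 : B)) = (ε * ε) • (1 : B) := by
            rw [smul_mul_smul_comm, one_mul]
          rw [sub_mul, mul_sub, mul_sub, h1, h2, h3]
          module
        have hkey : (2 * ε)⁻¹ • (p * p) + (ε / 2) • (1 : B) - p = (2 * ε)⁻¹ • (q * q) := by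
          rw [hqq]
          match_scalars <;> field_simp <;> ring
        have hq2 : 0 ≤ (2 * ε)⁻¹ • (q * q) := by
          have hs : (0:ℝ) ≤ (2 * ε)⁻¹ := by positivity
          have : (2 * ε)⁻¹ • (q * q)
              = star (Real.sqrt (2 * ε)⁻¹ • q) * (Real.sqrt (2 * ε)⁻¹ • q) := by
            rw [star_smul, star_trivial, hqsa.star_eq, smul_mul_smul_comm,
              Real.mul_self_sqrt hs]
          rw [this]
          exact star_mul_self_nonneg _
        have hple : p ≤ (2 * ε)⁻¹ • (p * p) + (ε / 2) • 1 := by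
          rw [← hkey] at hq2
          exact sub_nonneg.mp hq2
        have hconj := star_left_conjugate_le_conjugate hple y
        have hexp : star y * ((2 * ε)⁻¹ • (p * p) + (ε / 2) • (1 : B)) * y
            = (2 * ε)⁻¹ • (star y * (p * p) * y) + (ε / 2) • (star y * y) := by
          rw [mul_add, add_mul, mul_smul_comm, mul_smul_comm, smul_mul_assoc, smul_mul_assoc,
            mul_one]
        rw [hexp] at hconj
        have h5 := hmono _ _ hconj
        rw [map_add, ω.map_smul_of_tower, ω.map_smul_of_tower, hpp y, smul_zero, zero_add] at h5
        have h6 : ‖ω (star y * p * y)‖ ≤ ‖(ε / 2) • ω (star y * y)‖ :=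
          CStarAlgebra.norm_le_norm_of_nonneg_of_le h0 h5
        rw [norm_smul, Real.norm_of_nonneg (by positivity)] at h6
        have := norm_nonneg (ω (star y * y))
        nlinarith
      have hnz : ‖ω (star y * p * y)‖ = 0 := by
        by_contra hne
        have hpos' : 0 < ‖ω (star y * p * y)‖ :=
          lt_of_le_of_ne (norm_nonneg _) (Ne.symm hne)
        set K := ‖ω (star y * y)‖ with hK
        have hK0 : 0 ≤ K := norm_nonneg _
        have := hub (‖ω (star y * p * y)‖ / (K + 1)) (by positivity)
        rw [div_mul_eq_mul_div] at this
        have hK1 : (0:ℝ) < K + 1 := by linarith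
        rw [le_div_iff₀ hK1] at this
        nlinarith
      exact norm_eq_zero.mp hnz
    intro x
    constructor
    · exact hstar x
    · intro h
      have := hstar (star x) h
      simpa [star_star] using this
  · -- largest such ideal
    intro J _ hJmul hJker x hx y
    have hxy : x * y ∈ J := (hJmul y x hx).2
    have hfull : (star y * star x) * (x * y) ∈ J := (hJmul (star y * star x) _ hxy).1
    have := hJker _ hfull
    rwa [← mul_assoc] at this
end

section
/- In an involutive Markov category, an object A satisfies copy_A = swap ∘ copy_A if and only if the copy morphism copy_A is deterministic, i.e. (copy_A ⊗ copy_A) ∘ copy_A composed with the middle swap equals copy_{A⊗A} ∘ copy_A (the usual determinism equation). -/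
open CategoryTheory MonoidalCategory

universe v u

/-- An involutive Markov category: a symmetric monoidal category equipped with an
identity-on-objects strict symmetric monoidal involution on morphisms and with
copy/delete morphisms making every object an involutive comonoid, compatibly with
the monoidal structure, and with the monoidal unit terminal (all morphisms total). -/
class InvolutiveMarkovCategory (C : Type u) [Category.{v} C] [MonoidalCategory C]
    [SymmetricCategory C] where
  inv : ∀ {X Y : C}, (X ⟶ Y) → (X ⟶ Y)
  inv_inv : ∀ {X Y : C} (f : X ⟶ Y), inv (inv f) = f
  inv_id : ∀ X : C, inv (𝟙 X) = 𝟙 X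
  inv_comp : ∀ {X Y Z : C} (f : X ⟶ Y) (g : Y ⟶ Z), inv (f ≫ g) = inv f ≫ inv g
  inv_tensorHom : ∀ {X₁ Y₁ X₂ Y₂ : C} (f : X₁ ⟶ Y₁) (g : X₂ ⟶ Y₂),
    inv (f ⊗ₘ g) = inv f ⊗ₘ inv g
  inv_associator : ∀ X Y Z : C, inv (α_ X Y Z).hom = (α_ X Y Z).hom
  inv_leftUnitor : ∀ X : C, inv (λ_ X).hom = (λ_ X).hom
  inv_rightUnitor : ∀ X : C, inv (ρ_ X).hom = (ρ_ X).hom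
  inv_braiding : ∀ X Y : C, inv (β_ X Y).hom = (β_ X Y).hom
  copy : ∀ X : C, X ⟶ X ⊗ X
  del : ∀ X : C, X ⟶ 𝟙_ C
  copy_del_left : ∀ X : C, copy X ≫ (del X ⊗ₘ 𝟙 X) ≫ (λ_ X).hom = 𝟙 X
  copy_del_right : ∀ X : C, copy X ≫ (𝟙 X ⊗ₘ del X) ≫ (ρ_ X).hom = 𝟙 X
  copy_assoc : ∀ X : C,
    copy X ≫ (copy X ⊗ₘ 𝟙 X) ≫ (α_ X X X).hom = copy X ≫ (𝟙 X ⊗ₘ copy X)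
  inv_copy : ∀ X : C, inv (copy X) = copy X ≫ (β_ X X).hom
  inv_del : ∀ X : C, inv (del X) = del X
  copy_tensorObj : ∀ X Y : C, copy (X ⊗ Y) = (copy X ⊗ₘ copy Y) ≫ tensorμ X X Y Y
  del_tensorObj : ∀ X Y : C, del (X ⊗ Y) = (del X ⊗ₘ del Y) ≫ (λ_ (𝟙_ C)).hom
  copy_unit : copy (𝟙_ C) = (λ_ (𝟙_ C)).inv
  del_unit : del (𝟙_ C) = 𝟙 (𝟙_ C)
  del_total : ∀ {X Y : C} (f : X ⟶ Y), f ≫ del Y = del X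

namespace InvolutiveMarkovCategory

variable {C : Type u} [Category.{v} C] [MonoidalCategory C] [SymmetricCategory C]
  [InvolutiveMarkovCategory C]

/-- A morphism is deterministic if it is self-adjoint and commutes with copying. -/
def Deterministic {X Y : C} (f : X ⟶ Y) : Prop :=
  inv f = f ∧ f ≫ copy Y = copy X ≫ (f ⊗ₘ f)

/-- The pairing `⟨f,g⟩ = (f ⊗ g) ∘ copy`. -/
def pairing {X Y Z : C} (f : X ⟶ Y) (g : X ⟶ Z) : X ⟶ Y ⊗ Z :=
  copy X ≫ (f ⊗ₘ g)

/-- Two morphisms out of a common object are compatible if `⟨f,g⟩ = swap ∘ ⟨g,f⟩`. -/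
def Compatible {X Y Z : C} (f : X ⟶ Y) (g : X ⟶ Z) : Prop :=
  pairing f g = pairing g f ≫ (β_ Z Y).hom

/-- An object is classical if its copy morphism is invariant under the swap. -/
def Classical (X : C) : Prop := copy X ≫ (β_ X X).hom = copy X

end InvolutiveMarkovCategory

open InvolutiveMarkovCategory in
/-- An object `A` of an involutive Markov category satisfies `swap ∘ copy_A = copy_A`
(i.e. is classical) if and only if its copy morphism is deterministic. -/
theorem classical_iff_copy_deterministic
    {C : Type u} [Category.{v} C] [MonoidalCategory C] [SymmetricCategory C]
    [InvolutiveMarkovCategory C] (A : C) :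
    copy A ≫ (β_ A A).hom = copy A ↔ Deterministic (copy A) := by
  constructor
  · intro h
    have coassoc : copy A ≫ (copy A ⊗ₘ 𝟙 A) ≫ (α_ A A A).hom
        = copy A ≫ (𝟙 A ⊗ₘ copy A) := copy_assoc A
    have coassoc' : copy A ≫ (𝟙 A ⊗ₘ copy A) ≫ (α_ A A A).inv
        = copy A ≫ (copy A ⊗ₘ 𝟙 A) := by
      have h2 := congrArg (fun f => f ≫ (α_ A A A).inv) coassoc
      simpa [Category.assoc] using h2.symm
    have e1 : (copy A ⊗ₘ copy A : A ⊗ A ⟶ _)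
        = (copy A ⊗ₘ 𝟙 A) ≫ (𝟙 (A ⊗ A) ⊗ₘ copy A) := by
      rw [tensorHom_comp_tensorHom, Category.comp_id, Category.id_comp]
    have e2 : (𝟙 (A ⊗ A) ⊗ₘ copy A) ≫ (α_ A A (A ⊗ A)).hom
        = (α_ A A A).hom ≫ (𝟙 A ⊗ₘ (𝟙 A ⊗ₘ copy A)) := by
      have := associator_naturality (𝟙 A) (𝟙 A) (copy A)
      simpa using this
    have inner : copy A ≫ (𝟙 A ⊗ₘ copy A) ≫ (α_ A A A).inv ≫ ((β_ A A).hom ⊗ₘ 𝟙 A)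
          ≫ (α_ A A A).hom = copy A ≫ (𝟙 A ⊗ₘ copy A) := by
      slice_lhs 1 3 => rw [coassoc']
      slice_lhs 2 3 => rw [tensorHom_comp_tensorHom, h, Category.comp_id]
      slice_lhs 1 3 => rw [coassoc]
    have step1 : copy A ≫ (copy A ⊗ₘ copy A) ≫ (α_ A A (A ⊗ A)).hom
        = copy A ≫ (𝟙 A ⊗ₘ (copy A ≫ (𝟙 A ⊗ₘ copy A))) := by
      slice_lhs 2 2 => rw [e1]
      slice_lhs 3 4 => rw [e2]
      slice_lhs 1 3 => rw [coassoc]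
      simp only [tensorHom_comp_tensorHom, Category.id_comp, Category.assoc]
    refine ⟨by rw [inv_copy, h], ?_⟩
    rw [copy_tensorObj]
    calc copy A ≫ (copy A ⊗ₘ copy A) ≫ tensorμ A A A A
        = copy A ≫ (copy A ⊗ₘ copy A) ≫ (α_ A A (A ⊗ A)).hom
            ≫ (𝟙 A ⊗ₘ (α_ A A A).inv) ≫ (𝟙 A ⊗ₘ ((β_ A A).hom ⊗ₘ 𝟙 A))
            ≫ (𝟙 A ⊗ₘ (α_ A A A).hom) ≫ (α_ A A (A ⊗ A)).inv := by
          rw [tensorμ]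
          simp only [← id_tensorHom, ← tensorHom_id, Category.assoc]
      _ = copy A ≫ (𝟙 A ⊗ₘ (copy A ≫ (𝟙 A ⊗ₘ copy A)))
            ≫ (𝟙 A ⊗ₘ (α_ A A A).inv) ≫ (𝟙 A ⊗ₘ ((β_ A A).hom ⊗ₘ 𝟙 A))
            ≫ (𝟙 A ⊗ₘ (α_ A A A).hom) ≫ (α_ A A (A ⊗ A)).inv := by
          slice_lhs 1 3 => rw [step1]
          simp only [Category.assoc]
      _ = copy A ≫ (𝟙 A ⊗ₘ (copy A ≫ (𝟙 A ⊗ₘ copy A) ≫ (α_ A A A).inv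
            ≫ ((β_ A A).hom ⊗ₘ 𝟙 A) ≫ (α_ A A A).hom)) ≫ (α_ A A (A ⊗ A)).inv := by
          simp only [id_tensor_comp, Category.assoc]
      _ = copy A ≫ (𝟙 A ⊗ₘ (copy A ≫ (𝟙 A ⊗ₘ copy A))) ≫ (α_ A A (A ⊗ A)).inv := by
          rw [inner]
      _ = copy A ≫ (copy A ⊗ₘ copy A) := by
          rw [← Category.assoc, ← step1]
          simp [Category.assoc]
  · rintro ⟨h1, -⟩
    rw [← inv_copy, h1]
end

section
/- In an involutive Markov category, let φ : A → B be an autocompatible morphism such that φ ⊗ φ is a monomorphism. Then A is classical, i.e. swap ∘ copy_A = copy_A. -/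
open CategoryTheory MonoidalCategory

universe v u

open InvolutiveMarkovCategory in
/-- If `φ : A ⟶ B` is autocompatible and `φ ⊗ φ` is a monomorphism, then `A` is
classical. -/
theorem classical_of_autocompatible_mono
    {C : Type u} [Category.{v} C] [MonoidalCategory C] [SymmetricCategory C]
    [InvolutiveMarkovCategory C] {A B : C} (φ : A ⟶ B)
    (hauto : Compatible φ φ) (hmono : Mono (φ ⊗ₘ φ)) :
    copy A ≫ (β_ A A).hom = copy A := by
  rw [← cancel_mono (φ ⊗ₘ φ)]
  have h := hauto.symm
  simp only [Compatible, pairing] at h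
  rw [Category.assoc, ← BraidedCategory.braiding_naturality φ φ, ← Category.assoc, h]
end

section
/- In an involutive Markov category, if φ, ψ, ω are pairwise compatible morphisms out of a common object A, then φ is compatible with the pairing ⟨ψ,ω⟩ = (ψ ⊗ ω) ∘ copy_A. -/
open CategoryTheory MonoidalCategory

universe v u

open InvolutiveMarkovCategory in
lemma pairing_tensor_aux
    {C : Type u} [Category.{v} C] [MonoidalCategory C] [SymmetricCategory C]
    [InvolutiveMarkovCategory C] {A Y Z W : C} (f : A ⟶ Y) (g : A ⟶ Z) (h : A ⟶ W) :
    copy A ≫ (pairing f g ⊗ₘ h) ≫ (α_ Y Z W).hom = copy A ≫ (f ⊗ₘ pairing g h) := by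
  unfold pairing
  rw [show ((copy A ≫ (f ⊗ₘ g)) ⊗ₘ h) = (copy A ⊗ₘ 𝟙 A) ≫ ((f ⊗ₘ g) ⊗ₘ h) by
        rw [tensorHom_comp_tensorHom, Category.id_comp],
      show (f ⊗ₘ copy A ≫ (g ⊗ₘ h)) = (𝟙 A ⊗ₘ copy A) ≫ (f ⊗ₘ g ⊗ₘ h) by
        rw [tensorHom_comp_tensorHom, Category.id_comp]]
  simp only [Category.assoc]
  rw [associator_naturality]
  slice_lhs 1 3 => rw [copy_assoc]
  simp only [Category.assoc]

open InvolutiveMarkovCategory in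
lemma pairing_tensor_aux'
    {C : Type u} [Category.{v} C] [MonoidalCategory C] [SymmetricCategory C]
    [InvolutiveMarkovCategory C] {A Y Z W : C} (f : A ⟶ Y) (g : A ⟶ Z) (h : A ⟶ W) :
    copy A ≫ (pairing f g ⊗ₘ h) = copy A ≫ (f ⊗ₘ pairing g h) ≫ (α_ Y Z W).inv := by
  rw [← cancel_mono (α_ Y Z W).hom]
  simp only [Category.assoc, Iso.inv_hom_id, Category.comp_id]
  exact pairing_tensor_aux f g h

lemma hex_aux
    {C : Type u} [Category.{v} C] [MonoidalCategory C] [SymmetricCategory C]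
    (Y Z W : C) :
    (𝟙 Y ⊗ₘ (β_ Z W).hom) ≫ (α_ Y W Z).inv ≫ ((β_ Y W).hom ⊗ₘ 𝟙 Z) ≫ (α_ W Y Z).hom
      = (α_ Y Z W).inv ≫ (β_ (Y ⊗ Z) W).hom := by
  simp

open InvolutiveMarkovCategory in
/-- If `φ`, `ψ`, `ω` out of a common object are pairwise compatible, then `φ` is
compatible with the pairing `⟨ψ, ω⟩`. -/
theorem compatible_pairing_of_pairwise_compatible
    {C : Type u} [Category.{v} C] [MonoidalCategory C] [SymmetricCategory C]
    [InvolutiveMarkovCategory C] {A B D E : C}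
    (φ : A ⟶ B) (ψ : A ⟶ D) (ω : A ⟶ E)
    (hφψ : Compatible φ ψ) (hφω : Compatible φ ω) (hψω : Compatible ψ ω) :
    Compatible φ (pairing ψ ω) := by
  have key : pairing φ (pairing ψ ω)
      = copy A ≫ (ψ ⊗ₘ pairing ω φ) ≫ (𝟙 D ⊗ₘ (β_ E B).hom) ≫ (α_ D B E).inv ≫
          ((β_ D B).hom ⊗ₘ 𝟙 E) ≫ (α_ B D E).hom := by
    calc pairing φ (pairing ψ ω)
        = copy A ≫ (φ ⊗ₘ pairing ψ ω) := rfl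
      _ = copy A ≫ (pairing φ ψ ⊗ₘ ω) ≫ (α_ B D E).hom := (pairing_tensor_aux φ ψ ω).symm
      _ = copy A ≫ ((pairing ψ φ ≫ (β_ D B).hom) ⊗ₘ ω) ≫ (α_ B D E).hom := by rw [hφψ]
      _ = copy A ≫ (pairing ψ φ ⊗ₘ ω) ≫ ((β_ D B).hom ⊗ₘ 𝟙 E) ≫ (α_ B D E).hom := by
          rw [show ((pairing ψ φ ≫ (β_ D B).hom) ⊗ₘ ω)
              = (pairing ψ φ ⊗ₘ ω) ≫ ((β_ D B).hom ⊗ₘ 𝟙 E) by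
            rw [tensorHom_comp_tensorHom, Category.comp_id]]
          simp [Category.assoc]
      _ = copy A ≫ (ψ ⊗ₘ pairing φ ω) ≫ (α_ D B E).inv ≫ ((β_ D B).hom ⊗ₘ 𝟙 E) ≫
            (α_ B D E).hom := by
          rw [← Category.assoc, ← Category.assoc (copy A), pairing_tensor_aux' ψ φ ω]
          simp [Category.assoc]
      _ = copy A ≫ (ψ ⊗ₘ (pairing ω φ ≫ (β_ E B).hom)) ≫ (α_ D B E).inv ≫
            ((β_ D B).hom ⊗ₘ 𝟙 E) ≫ (α_ B D E).hom := by rw [hφω]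
      _ = copy A ≫ (ψ ⊗ₘ pairing ω φ) ≫ (𝟙 D ⊗ₘ (β_ E B).hom) ≫ (α_ D B E).inv ≫
            ((β_ D B).hom ⊗ₘ 𝟙 E) ≫ (α_ B D E).hom := by
          rw [show (ψ ⊗ₘ (pairing ω φ ≫ (β_ E B).hom))
              = (ψ ⊗ₘ pairing ω φ) ≫ (𝟙 D ⊗ₘ (β_ E B).hom) by
            rw [tensorHom_comp_tensorHom, Category.comp_id]]
          simp [Category.assoc]
  have rhs : pairing (pairing ψ ω) φ ≫ (β_ (D ⊗ E) B).hom
      = copy A ≫ (ψ ⊗ₘ pairing ω φ) ≫ (α_ D E B).inv ≫ (β_ (D ⊗ E) B).hom := by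
    show (copy A ≫ (pairing ψ ω ⊗ₘ φ)) ≫ (β_ (D ⊗ E) B).hom = _
    rw [Category.assoc, ← Category.assoc (copy A), pairing_tensor_aux' ψ ω φ]
    simp [Category.assoc]
  unfold Compatible
  rw [key, rhs, ← hex_aux]
end
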